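/- Let ε>1, 0<x<1, and set ψ(x,t)=ε·log(1−xt)−log(1−t), t_s=(εx−1)/((ε−1)x), δ=εx−1, and α=sgn(δ)·(−2ψ(x,t_s))^{1/2}. Then as δ→0, α = (ε/(ε−1))^{1/2}·δ − (ε/(ε−1))^{1/2}·(ε−2)·δ²/(3(ε−1)) + O(δ³). In particular, for every b>0, lim_{x→1/ε} (α/(εx−1))^{b} = (ε/(ε−1))^{b/2}. -/

import Mathlib

open Real Filter Topology Asymptotics

/-- `ψ(x, t_s)` where `ψ(x,t) = ε log(1-xt) - log(1-t)` and `t_s = (εx-1)/((ε-1)x)`. -/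
noncomputable def psiSaddle (ε x : ℝ) : ℝ :=
  ε * Real.log (1 - x * ((ε * x - 1) / ((ε - 1) * x)))
    - Real.log (1 - (ε * x - 1) / ((ε - 1) * x))

/-- `α = sgn(εx-1) (-2 ψ(x,t_s))^{1/2}`. -/
noncomputable def alph (ε x : ℝ) : ℝ :=
  Real.sign (ε * x - 1) * Real.sqrt (-2 * psiSaddle ε x)

/-!
Put `δ = εx - 1`. On `-1 < δ < ε - 1` one has `ψ = (ε-1) log(1 - δ/(ε-1)) + log(1 + δ) ≤ 0`, and the
cubic Taylor polynomial of `log(1 - x)` shows that `α² = -2ψ` agrees with the square of the claimed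
expansion `T(δ)` (`alphApprox`) up to `O(δ⁴)`. Since `α` and `T` both have the sign of `δ` and `|T| ≍ |δ|`,
`|α - T| ≤ |α² - T²| / |T| = O(δ³)`. The limit follows because `α/δ → (ε/(ε-1))^{1/2}`.
-/

noncomputable def alphApprox (ε δ : ℝ) : ℝ :=
  √(ε / (ε - 1)) * δ - √(ε / (ε - 1)) * (ε - 2) * δ ^ 2 / (3 * (ε - 1))

lemma abs_log_one_sub_add_le {x : ℝ} (hx : |x| ≤ 1 / 2) :
    |log (1 - x) + (x + x ^ 2 / 2 + x ^ 3 / 3)| ≤ 2 * |x| ^ 4 := by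
  have h := abs_log_sub_add_sum_range_le (hx.trans_lt (by norm_num)) 3
  norm_num [Finset.sum_range_succ] at h
  calc _ = |x + x ^ 2 / 2 + x ^ 3 / 3 + log (1 - x)| := by ring_nf
    _ ≤ |x| ^ 4 / (1 - |x|) := h
    _ ≤ 2 * |x| ^ 4 := by
      rw [div_le_iff₀ (by linarith)]
      nlinarith [pow_nonneg (abs_nonneg x) 4]

lemma log_one_sub_add_isBigO :
    (fun x : ℝ => log (1 - x) + (x + x ^ 2 / 2 + x ^ 3 / 3)) =O[𝓝 0] fun x => x ^ 4 := by
  refine IsBigO.of_bound 2 ?_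
  filter_upwards [Metric.closedBall_mem_nhds (0 : ℝ) (by norm_num : (0 : ℝ) < 1 / 2)] with x hx
  rw [Metric.mem_closedBall, dist_zero_right, Real.norm_eq_abs] at hx
  simpa only [Real.norm_eq_abs, abs_pow] using abs_log_one_sub_add_le hx

lemma abs_sub_mul_abs_le_abs_sq_sub_sq {u v : ℝ} (h : 0 ≤ u * v) :
    |u - v| * |v| ≤ |u ^ 2 - v ^ 2| := by
  rw [show u ^ 2 - v ^ 2 = (u - v) * (u + v) by ring, abs_mul]
  have hle : |v| ≤ |u + v| := sq_le_sq.mp (by nlinarith [sq_nonneg u])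
  exact mul_le_mul_of_nonneg_left hle (abs_nonneg _)

lemma isBigO_sub_of_sq_sub_sq {α : Type*} {l : Filter α} {u v g h : α → ℝ}
    (hsign : ∀ᶠ x in l, 0 ≤ u x * v x)
    (hsq : (fun x => u x ^ 2 - v x ^ 2) =O[l] fun x => g x * h x) (hv : h =O[l] v) :
    (fun x => u x - v x) =O[l] g := by
  obtain ⟨c, hc, hcu⟩ := hsq.exists_pos
  obtain ⟨d, hd, hdh⟩ := hv.exists_pos
  refine IsBigO.of_bound (c * d) ?_
  filter_upwards [hsign, hcu.bound, hdh.bound] with x hx hcx hdx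
  simp only [Real.norm_eq_abs, abs_mul] at hcx hdx ⊢
  rcases eq_or_ne (v x) 0 with hv0 | hv0
  · have hh0 : h x = 0 := by simpa [hv0] using hdx
    have hu0 : u x = 0 := by simpa [hv0, hh0] using hcx
    simp only [hu0, hv0, sub_zero, abs_zero]
    positivity
  · refine le_of_mul_le_mul_right ?_ (abs_pos.2 hv0)
    calc |u x - v x| * |v x| ≤ |u x ^ 2 - v x ^ 2| := abs_sub_mul_abs_le_abs_sq_sub_sq hx
      _ ≤ c * (|g x| * |h x|) := hcx
      _ ≤ c * (|g x| * (d * |v x|)) := by gcongr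
      _ = c * d * |g x| * |v x| := by ring

section

variable {ε δ : ℝ}

lemma psiSaddle_shift (hε : 1 < ε) (h1 : -1 < δ) (h2 : δ < ε - 1) :
    psiSaddle ε ((1 + δ) / ε) = (ε - 1) * log (1 - δ / (ε - 1)) + log (1 + δ) := by
  have hε0 : ε ≠ 0 := by positivity
  have ha : 0 < ε - 1 := by linarith
  have h1' : 0 < 1 + δ := by linarith
  have h2' : 0 < ε - 1 - δ := by linarith
  have e1 : 1 - (1 + δ) / ε * ((ε * ((1 + δ) / ε) - 1) / ((ε - 1) * ((1 + δ) / ε)))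
      = (ε - 1 - δ) / (ε - 1) := by
    field_simp; ring
  have e2 : 1 - (ε * ((1 + δ) / ε) - 1) / ((ε - 1) * ((1 + δ) / ε))
      = (ε - 1 - δ) / ((ε - 1) * (1 + δ)) := by
    field_simp; ring
  have e3 : 1 - δ / (ε - 1) = (ε - 1 - δ) / (ε - 1) := by field_simp
  rw [psiSaddle, e1, e2, e3, log_div h2'.ne' ha.ne', log_div h2'.ne' (by positivity),
    log_mul ha.ne' h1'.ne']
  ring

lemma psiSaddle_shift_nonpos (hε : 1 < ε) (h1 : -1 < δ) (h2 : δ < ε - 1) :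
    psiSaddle ε ((1 + δ) / ε) ≤ 0 := by
  have ha : 0 < ε - 1 := by linarith
  have hlog₁ := log_le_sub_one_of_pos (show 0 < 1 - δ / (ε - 1) by
    rw [sub_pos, div_lt_one ha]; exact h2)
  have hlog₂ := log_le_sub_one_of_pos (show 0 < 1 + δ by linarith)
  have hscaled : (ε - 1) * log (1 - δ / (ε - 1)) ≤ -δ :=
    calc _ ≤ (ε - 1) * (1 - δ / (ε - 1) - 1) := mul_le_mul_of_nonneg_left hlog₁ ha.le
      _ = -δ := by field_simp; ring
  rw [psiSaddle_shift hε h1 h2]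
  linarith

lemma alph_shift (hε : 1 < ε) :
    alph ε ((1 + δ) / ε) = Real.sign δ * √(-2 * psiSaddle ε ((1 + δ) / ε)) := by
  have hε0 : ε ≠ 0 := by positivity
  rw [alph, show ε * ((1 + δ) / ε) - 1 = δ by field_simp; ring]

lemma alph_shift_sq (hε : 1 < ε) (h1 : -1 < δ) (h2 : δ < ε - 1) :
    alph ε ((1 + δ) / ε) ^ 2 = -2 * psiSaddle ε ((1 + δ) / ε) := by
  rw [alph_shift hε, mul_pow, sq_sqrt (by linarith [psiSaddle_shift_nonpos hε h1 h2])]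
  rcases eq_or_ne δ 0 with rfl | hδ
  · rw [psiSaddle_shift hε h1 h2]
    simp
  · rcases Real.sign_apply_eq_of_ne_zero δ hδ with h | h <;> simp [h]

lemma alphApprox_sq (hε : 1 < ε) :
    alphApprox ε δ ^ 2 = ε / (ε - 1) * (δ - (ε - 2) * δ ^ 2 / (3 * (ε - 1))) ^ 2 := by
  have hsq : √(ε / (ε - 1)) ^ 2 = ε / (ε - 1) :=
    sq_sqrt (div_nonneg (by linarith) (by linarith))
  rw [← hsq, alphApprox]
  ring

lemma neg_two_psiSaddle_sub_alphApprox_sq_isBigO (hε : 1 < ε) :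
    (fun δ => -2 * psiSaddle ε ((1 + δ) / ε) - alphApprox ε δ ^ 2) =O[𝓝 0] fun δ => δ ^ 4 := by
  set L : ℝ → ℝ := fun x => log (1 - x) + (x + x ^ 2 / 2 + x ^ 3 / 3)
  have ha : 0 < ε - 1 := by linarith
  have hL₁ : (fun δ => L (δ / (ε - 1))) =O[𝓝 0] fun δ => δ ^ 4 := by
    have hdiv : Tendsto (fun δ : ℝ => δ / (ε - 1)) (𝓝 0) (𝓝 0) := by
      simpa using (continuous_id.div_const (ε - 1)).tendsto 0
    refine (log_one_sub_add_isBigO.comp_tendsto hdiv).trans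
      ((isBigO_const_mul_self ((ε - 1) ^ 4)⁻¹ (fun δ : ℝ => δ ^ 4) _).congr_left fun δ => ?_)
    rw [Function.comp_apply, div_pow, inv_mul_eq_div]
  have hL₂ : (fun δ => L (-δ)) =O[𝓝 0] fun δ => δ ^ 4 := by
    have hneg : Tendsto (fun δ : ℝ => -δ) (𝓝 0) (𝓝 0) := by simpa using tendsto_neg (0 : ℝ)
    exact (log_one_sub_add_isBigO.comp_tendsto hneg).congr_right fun δ => by
      simp only [Function.comp_apply]; ring
  have hrest := ((hL₁.const_mul_left (-2 * (ε - 1))).add (hL₂.const_mul_left (-2))).sub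
    (isBigO_const_mul_self (ε / (ε - 1) * ((ε - 2) / (3 * (ε - 1))) ^ 2) (fun δ : ℝ => δ ^ 4) _)
  -- With `L` the cubic Taylor remainder, the terms of order `≤ 3` in `δ` cancel exactly.
  refine hrest.congr' ?_ EventuallyEq.rfl
  filter_upwards [Ioo_mem_nhds (by norm_num : (-1 : ℝ) < 0) ha] with δ ⟨h1, h2⟩
  have h1' : 1 + δ ≠ 0 := by linarith
  rw [psiSaddle_shift hε h1 h2, alphApprox_sq hε]
  simp only [L, sub_neg_eq_add]
  field_simp
  ring

lemma alph_shift_sub_alphApprox_isBigO (hε : 1 < ε) :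
    (fun δ => alph ε ((1 + δ) / ε) - alphApprox ε δ) =O[𝓝 0] fun δ => δ ^ 3 := by
  set s := √(ε / (ε - 1))
  set m := (ε - 2) / (3 * (ε - 1))
  have hs : 0 < s := sqrt_pos.2 (div_pos (by linarith) (by linarith))
  have hT : ∀ δ, alphApprox ε δ = s * δ * (1 - m * δ) := fun δ => by
    simp only [alphApprox, s, m]; ring
  have hmδ : ∀ᶠ δ in 𝓝 (0 : ℝ), m * δ < 1 / 2 :=
    ((continuous_const.mul continuous_id).tendsto' 0 0 (by simp)).eventually_lt_const
      (by norm_num)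
  have hdomain : ∀ᶠ δ in 𝓝 (0 : ℝ), δ ∈ Set.Ioo (-1) (ε - 1) :=
    Ioo_mem_nhds (by norm_num) (by linarith)
  refine isBigO_sub_of_sq_sub_sq (h := fun δ => δ) ?_ ?_ ?_
  · filter_upwards [hmδ] with δ hδ
    rw [alph_shift hε, hT]
    have hrest : 0 ≤ √(-2 * psiSaddle ε ((1 + δ) / ε)) * s * (1 - m * δ) := by
      have := sqrt_nonneg (-2 * psiSaddle ε ((1 + δ) / ε))
      have : 0 ≤ 1 - m * δ := by linarith
      positivity
    calc 0 ≤ Real.sign δ * δ * (√(-2 * psiSaddle ε ((1 + δ) / ε)) * s * (1 - m * δ)) :=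
          mul_nonneg (Real.sign_mul_nonneg δ) hrest
      _ = _ := by ring
  · refine (neg_two_psiSaddle_sub_alphApprox_sq_isBigO hε).congr' ?_ (.of_forall fun δ => by ring)
    filter_upwards [hdomain] with δ ⟨h1, h2⟩
    rw [alph_shift_sq hε h1 h2]
  · refine IsBigO.of_bound (2 / s) ?_
    filter_upwards [hmδ] with δ hδ
    rw [hT, Real.norm_eq_abs, Real.norm_eq_abs, abs_mul, abs_mul, abs_of_pos hs,
      abs_of_pos (by linarith : 0 < 1 - m * δ)]
    field_simp
    nlinarith [abs_nonneg δ]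

lemma tendsto_alph_div (hε : 1 < ε) :
    Tendsto (fun x => alph ε x / (ε * x - 1)) (𝓝[≠] (1 / ε)) (𝓝 √(ε / (ε - 1))) := by
  have hε0 : ε ≠ 0 := by positivity
  set s := √(ε / (ε - 1))
  have hquad : (fun δ => alphApprox ε δ - s * δ) =O[𝓝 0] fun δ => δ ^ 2 :=
    (isBigO_const_mul_self (-(s * (ε - 2) / (3 * (ε - 1)))) (fun δ : ℝ => δ ^ 2) _).congr_left
      fun δ => by simp only [alphApprox, s]; ring
  have hlin : (fun δ => alph ε ((1 + δ) / ε) - s * δ) =o[𝓝 0] fun δ => δ :=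
    (((alph_shift_sub_alphApprox_isBigO hε).trans_isLittleO (isLittleO_pow_id (by norm_num))).add
      (hquad.trans_isLittleO (isLittleO_pow_id (by norm_num)))).congr_left fun δ => by ring
  have hδ : Tendsto (fun δ => alph ε ((1 + δ) / ε) / δ) (𝓝[≠] 0) (𝓝 s) := by
    have := (hlin.tendsto_div_nhds_zero.mono_left (nhdsWithin_le_nhds (s := {0}ᶜ))).add_const s
    rw [zero_add] at this
    refine this.congr' ?_
    filter_upwards [self_mem_nhdsWithin] with δ (hδ : δ ≠ 0)
    field_simp
    ring
  have hshift : Tendsto (fun x => ε * x - 1) (𝓝[≠] (1 / ε)) (𝓝[≠] 0) := by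
    have hmaps : Set.MapsTo (fun x => ε * x - 1) {1 / ε}ᶜ {0}ᶜ := fun x hx h => hx <| by
      simp only [Set.mem_singleton_iff] at h ⊢
      field_simp
      linarith
    simpa [hε0] using
      (show Continuous fun x : ℝ => ε * x - 1 by fun_prop).continuousWithinAt.tendsto_nhdsWithin
        (x := 1 / ε) hmaps
  refine (hδ.comp hshift).congr fun x => ?_
  simp only [Function.comp_apply, add_sub_cancel, mul_div_cancel_left₀ x hε0]

end

/-- With `δ = εx - 1` (so `x = (1+δ)/ε`), as `δ → 0`,
`α = (ε/(ε-1))^{1/2} δ - (ε/(ε-1))^{1/2} (ε-2) δ²/(3(ε-1)) + O(δ³)`; in particular,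
for every `b > 0`, `(α/(εx-1))^b → (ε/(ε-1))^{b/2}` as `x → 1/ε`. -/
theorem alpha_expansion (ε : ℝ) (hε : 1 < ε) :
    ((fun δ : ℝ => alph ε ((1 + δ) / ε)
        - (Real.sqrt (ε / (ε - 1)) * δ
            - Real.sqrt (ε / (ε - 1)) * (ε - 2) * δ ^ 2 / (3 * (ε - 1))))
      =O[𝓝 0] fun δ : ℝ => δ ^ 3) ∧
    (∀ b : ℝ, 0 < b →
      Tendsto (fun x : ℝ => (alph ε x / (ε * x - 1)) ^ b) (𝓝[≠] (1 / ε))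
        (𝓝 ((ε / (ε - 1)) ^ (b / 2)))) := by
  refine ⟨alph_shift_sub_alphApprox_isBigO hε, fun b _ => ?_⟩
  have hpos : 0 < ε / (ε - 1) := div_pos (by linarith) (by linarith)
  have h := (continuousAt_rpow_const _ b (Or.inl (sqrt_pos.2 hpos).ne')).tendsto.comp
    (tendsto_alph_div hε)
  rwa [sqrt_eq_rpow, ← rpow_mul hpos.le, one_div_mul_eq_div] at h
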